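/- With g₀ as above (a = (√5+1)/2, b = (√5-1)/2), one has 0 ≤ g₀(x) ≤ −x for all x ∈ [−1,0]; in particular |g₀(x)| ≤ |x| on [−1,0]. -/

import Mathlib

noncomputable def aK : ℝ := (Real.sqrt 5 + 1) / 2
noncomputable def bK : ℝ := (Real.sqrt 5 - 1) / 2

noncomputable def f₀ : ℝ → ℝ := fun x =>
  1 / (Real.sqrt aK * (aK + bK)) * Real.sinh (Real.sqrt aK * x)
    - 1 / (Real.sqrt bK * (aK + bK)) * Real.sin (Real.sqrt bK * x)

noncomputable def g₀ : ℝ → ℝ := fun x =>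
  1 / (aK * (aK + bK)) * Real.cosh (Real.sqrt aK * x)
    + 1 / (bK * (aK + bK)) * Real.cos (Real.sqrt bK * x)
    - 1 / (aK * (aK + bK)) - 1 / (bK * (aK + bK))

/-!
Write `g₀ x = ((cosh (√a x) - 1) / a + (cos (√b x) - 1) / b) / (a + b)`. The second-order
bounds `cosh t ≥ 1 + t² / 2` and `cos t ≥ 1 - t² / 2` make the two quadratic terms cancel, so
the bracket is nonnegative. Conversely `cos t ≤ 1` and `cosh t ≤ exp (t² / 2) ≤ 1 + t²` for
`t² ≤ 2` bound the bracket by `x²` when `a ≤ 2` and `x² ≤ 1`; since `a + b = √5 ≥ 1`, this gives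
`g₀ x ≤ x² ≤ -x` on `[-1, 0]`.
-/

open Real

theorem one_add_sq_div_two_le_cosh (t : ℝ) : 1 + t ^ 2 / 2 ≤ cosh t := by
  have := sum_le_hasSum (Finset.range 2) (fun i _ => by rw [pow_mul]; positivity) (hasSum_cosh t)
  simpa [Finset.sum_range_succ] using this

theorem cosh_le_one_add_sq {t : ℝ} (ht : t ^ 2 ≤ 2) : cosh t ≤ 1 + t ^ 2 := by
  have hhalf : 0 ≤ t ^ 2 / 2 := by positivity
  have hexp := abs_exp_sub_one_le (x := t ^ 2 / 2) (by rw [abs_of_nonneg hhalf]; linarith)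
  rw [abs_of_nonneg hhalf] at hexp
  linarith [cosh_le_exp_half_sq t, le_abs_self (exp (t ^ 2 / 2) - 1)]

theorem sq_sqrt_mul {a : ℝ} (ha : 0 ≤ a) (x : ℝ) : (√a * x) ^ 2 = a * x ^ 2 := by
  rw [mul_pow, sq_sqrt ha]

theorem sq_div_two_le_cosh_sqrt_mul_sub_one_div {a : ℝ} (ha : 0 < a) (x : ℝ) :
    x ^ 2 / 2 ≤ (cosh (√a * x) - 1) / a := by
  rw [le_div_iff₀ ha]
  linarith [one_add_sq_div_two_le_cosh (√a * x), sq_sqrt_mul ha.le x]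

theorem cosh_sqrt_mul_sub_one_div_le_sq {a : ℝ} (ha : 0 < a) (ha₂ : a ≤ 2) {x : ℝ}
    (hx : x ^ 2 ≤ 1) : (cosh (√a * x) - 1) / a ≤ x ^ 2 := by
  have hsq := sq_sqrt_mul ha.le x
  rw [div_le_iff₀ ha]
  linarith [cosh_le_one_add_sq (t := √a * x) (by nlinarith)]

theorem neg_sq_div_two_le_cos_sqrt_mul_sub_one_div {a : ℝ} (ha : 0 < a) (x : ℝ) :
    -(x ^ 2 / 2) ≤ (cos (√a * x) - 1) / a := by
  rw [le_div_iff₀ ha]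
  linarith [one_sub_sq_div_two_le_cos (x := √a * x), sq_sqrt_mul ha.le x]

theorem cos_sqrt_mul_sub_one_div_nonpos {a : ℝ} (ha : 0 ≤ a) (x : ℝ) :
    (cos (√a * x) - 1) / a ≤ 0 :=
  div_nonpos_of_nonpos_of_nonneg (by linarith [cos_le_one (√a * x)]) ha

theorem cosh_cos_sum_nonneg {a b : ℝ} (ha : 0 < a) (hb : 0 < b) (x : ℝ) :
    0 ≤ (cosh (√a * x) - 1) / a + (cos (√b * x) - 1) / b := by
  linarith [sq_div_two_le_cosh_sqrt_mul_sub_one_div ha x,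
    neg_sq_div_two_le_cos_sqrt_mul_sub_one_div hb x]

theorem cosh_cos_sum_le_sq {a b : ℝ} (ha : 0 < a) (ha₂ : a ≤ 2) (hb : 0 ≤ b) {x : ℝ}
    (hx : x ^ 2 ≤ 1) : (cosh (√a * x) - 1) / a + (cos (√b * x) - 1) / b ≤ x ^ 2 := by
  linarith [cosh_sqrt_mul_sub_one_div_le_sq ha ha₂ hx, cos_sqrt_mul_sub_one_div_nonpos hb x]

theorem aK_pos : 0 < aK := by
  unfold aK; positivity

theorem one_lt_sqrt_five : 1 < √5 := by
  rw [lt_sqrt zero_le_one]; norm_num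

theorem bK_pos : 0 < bK := by
  unfold bK; linarith [one_lt_sqrt_five]

theorem aK_le_two : aK ≤ 2 := by
  have : √5 ≤ 3 := by rw [sqrt_le_iff]; norm_num
  unfold aK; linarith

theorem one_le_aK_add_bK : 1 ≤ aK + bK := by
  unfold aK bK; linarith [one_lt_sqrt_five]

theorem g₀_eq (x : ℝ) :
    g₀ x = ((cosh (√aK * x) - 1) / aK + (cos (√bK * x) - 1) / bK) / (aK + bK) := by
  simp only [g₀, one_div, mul_inv]; ring

theorem g₀_nonneg (x : ℝ) : 0 ≤ g₀ x := by
  rw [g₀_eq]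
  exact div_nonneg (cosh_cos_sum_nonneg aK_pos bK_pos x) (by linarith [one_le_aK_add_bK])

theorem g₀_le_sq {x : ℝ} (hx : x ^ 2 ≤ 1) : g₀ x ≤ x ^ 2 := by
  rw [g₀_eq]
  exact (div_le_self (cosh_cos_sum_nonneg aK_pos bK_pos x) one_le_aK_add_bK).trans
    (cosh_cos_sum_le_sq aK_pos aK_le_two bK_pos.le hx)

theorem g₀_bounds :
    ∀ x ∈ Set.Icc (-1 : ℝ) 0, 0 ≤ g₀ x ∧ g₀ x ≤ -x ∧ |g₀ x| ≤ |x| := by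
  rintro x ⟨hx₁, hx₂⟩
  have hsq : x ^ 2 ≤ -x := by nlinarith
  have hupper : g₀ x ≤ -x := (g₀_le_sq (by linarith)).trans hsq
  refine ⟨g₀_nonneg x, hupper, ?_⟩
  rwa [abs_of_nonneg (g₀_nonneg x), abs_of_nonpos hx₂]
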